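/- arXiv:math/0107233 — 6 statements merged into one kernel-verified Lean document; each statement's English description precedes it below -/
import Mathlib

section
/- Let n ≥ 1 and let A and B be n×n complex matrices. Then the symmetric (Strang) operator-exponential splitting approximates the exponential of the sum to third order in the time step: there exist constants C > 0 and t₀ > 0 such that for all real t with |t| ≤ t₀ one has ‖exp(t(A+B)) − exp((t/2)B)·exp(tA)·exp((t/2)B)‖ ≤ C·|t|³. -/
attribute [local instance]
  Matrix.instL2OpNormedAddCommGroup Matrix.instL2OpNormedSpace
  Matrix.instL2OpNormedRing Matrix.instL2OpNormedAlgebra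

/-!
Write `T` for the quadratic Taylor polynomial of `exp`. Taylor's formula for the analytic map
`exp` gives `exp (t • M) = T (t • M) + O(t³)`, and such errors survive multiplication by factors
bounded near `t = 0`, so it suffices to compare `T (t • X) * T (t • A) * T (t • X)` with
`T (t • (X + A + X))`, where `X = B / 2`. Expanding the product, the noncommutative monomials of
degree at most two add up exactly to `T (t • (X + A + X))`; every other monomial is `O(t³)`.
-/

open NormedSpace Asymptotics Filter Topology Finset
open scoped Nat

theorem Asymptotics.IsBigO.mul_sub_mul {α R S : Type*} [SeminormedRing R] [NormedRing S]
    [NormMulClass S] {l : Filter α} {f₁ f₂ g₁ g₂ : α → R} {u : α → S}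
    (h₁ : (fun x => f₁ x - g₁ x) =O[l] u) (h₂ : (fun x => f₂ x - g₂ x) =O[l] u)
    (hf₁ : f₁ =O[l] fun _ => (1 : S)) (hg₂ : g₂ =O[l] fun _ => (1 : S)) :
    (fun x => f₁ x * f₂ x - g₁ x * g₂ x) =O[l] u := by
  have hl := hf₁.mul h₂
  have hr := h₁.mul hg₂
  simp only [one_mul, mul_one] at hl hr
  exact (hl.add hr).congr_left fun x => by noncomm_ring

theorem isBigO_pow_smul_const {𝕜 E : Type*} [NormedField 𝕜] [SeminormedAddCommGroup E]
    [NormedSpace 𝕜 E] {m n : ℕ} (h : n ≤ m) (W : E) :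
    (fun t : 𝕜 => t ^ m • W) =O[𝓝 0] fun t => t ^ n := by
  have hm : (fun t : 𝕜 => t ^ m • W) =O[𝓝 0] fun t => t ^ m :=
    IsBigO.of_bound ‖W‖ (Eventually.of_forall fun t => by simp [norm_smul, mul_comm])
  rcases h.eq_or_lt with rfl | hlt
  · exact hm
  · exact hm.trans (isLittleO_pow_pow hlt).isBigO

section

variable {𝕂 𝔸 : Type*} [RCLike 𝕂] [NormedRing 𝔸] [NormedAlgebra 𝕂 𝔸]

theorem partialSum_expSeries_eq (n : ℕ) (x : 𝔸) :
    (expSeries 𝕂 𝔸).partialSum n x = ∑ i ∈ range n, (i !⁻¹ : 𝕂) • x ^ i := by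
  simp [FormalMultilinearSeries.partialSum, expSeries_apply_eq]

theorem partialSum_three_expSeries_mul_mul_sub (x y : 𝔸) :
    (expSeries 𝕂 𝔸).partialSum 3 x * (expSeries 𝕂 𝔸).partialSum 3 y *
        (expSeries 𝕂 𝔸).partialSum 3 x - (expSeries 𝕂 𝔸).partialSum 3 (x + y + x) =
      ∑ ijk ∈ (range 3 ×ˢ range 3 ×ˢ range 3).filter (fun ijk => 3 ≤ ijk.1 + ijk.2.1 + ijk.2.2),
        ((ijk.1 ! * ijk.2.1 ! * ijk.2.2 ! : 𝕂)⁻¹) • (x ^ ijk.1 * y ^ ijk.2.1 * x ^ ijk.2.2) := by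
  simp only [partialSum_expSeries_eq, Finset.sum_filter, Finset.sum_product, sum_range_succ,
    sum_range_zero]
  norm_num [Nat.factorial, pow_succ]
  simp only [mul_add, add_mul, smul_mul_assoc, mul_smul_comm, smul_smul, one_mul, mul_one,
    smul_add, mul_assoc]
  module

theorem partialSum_three_expSeries_smul_mul_mul_sub_isBigO (X Y : 𝔸) :
    (fun t : 𝕂 => (expSeries 𝕂 𝔸).partialSum 3 (t • X) * (expSeries 𝕂 𝔸).partialSum 3 (t • Y) *
        (expSeries 𝕂 𝔸).partialSum 3 (t • X) - (expSeries 𝕂 𝔸).partialSum 3 (t • (X + Y + X)))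
      =O[𝓝 0] fun t => t ^ 3 := by
  simp_rw [smul_add, partialSum_three_expSeries_mul_mul_sub, smul_pow, smul_mul_smul_comm,
    ← pow_add]
  refine IsBigO.fun_sum fun ijk hijk => ?_
  exact (IsBigO.const_smul_self _).trans (isBigO_pow_smul_const (mem_filter.1 hijk).2 _)

variable [CompleteSpace 𝔸]

theorem exp_sub_partialSum_expSeries_isBigO (n : ℕ) :
    (fun x : 𝔸 => exp x - (expSeries 𝕂 𝔸).partialSum n x) =O[𝓝 0] fun x => ‖x‖ ^ n := by
  simpa using (exp_hasFPowerSeriesAt_zero (𝕂 := 𝕂) (𝔸 := 𝔸)).isBigO_sub_partialSum_pow n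

theorem exp_smul_sub_partialSum_expSeries_isBigO (M : 𝔸) (n : ℕ) :
    (fun t : 𝕂 => exp (t • M) - (expSeries 𝕂 𝔸).partialSum n (t • M)) =O[𝓝 0]
      fun t => t ^ n := by
  have hM : Tendsto (fun t : 𝕂 => t • M) (𝓝 0) (𝓝 0) := by
    simpa using (tendsto_id (x := 𝓝 (0 : 𝕂))).smul_const M
  refine ((exp_sub_partialSum_expSeries_isBigO n).comp_tendsto hM).trans ?_
  refine IsBigO.of_bound (‖M‖ ^ n) (Eventually.of_forall fun t => ?_)
  simp [norm_smul, mul_pow, mul_comm]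

theorem exp_smul_add_sub_strang_isBigO (A B : 𝔸) :
    (fun t : 𝕂 => exp (t • (A + B)) - exp ((t / 2) • B) * exp (t • A) * exp ((t / 2) • B))
      =O[𝓝 0] fun t => t ^ 3 := by
  set X : 𝔸 := (2⁻¹ : 𝕂) • B
  have hX (t : 𝕂) : (t / 2) • B = t • X := by simp only [X, smul_smul, div_eq_mul_inv]
  have hAB : A + B = X + A + X := by simp only [X]; module
  have hbdd (f : 𝕂 → 𝔸) (hf : Continuous f) : f =O[𝓝 0] fun _ => (1 : 𝕂) :=
    (hf.tendsto 0).isBigO_one 𝕂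
  have hexp : Continuous (exp : 𝔸 → 𝔸) :=
    continuous_iff_continuousAt.2 fun x => (exp_analytic (𝕂 := 𝕂) x).continuousAt
  have hT := (expSeries 𝕂 𝔸).partialSum_continuous 3
  have hE (M : 𝔸) := exp_smul_sub_partialSum_expSeries_isBigO (𝕂 := 𝕂) M 3
  have hXA := (hE X).mul_sub_mul (hE A) (hbdd _ (by fun_prop)) (hbdd _ (by fun_prop))
  have hXAX := hXA.mul_sub_mul (hE X) (hbdd _ (by fun_prop)) (hbdd _ (by fun_prop))
  have hpoly := partialSum_three_expSeries_smul_mul_mul_sub_isBigO (𝕂 := 𝕂) X A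
  simp_rw [hX, hAB]
  exact (((hE (X + A + X)).sub hXAX).sub hpoly).congr_left fun t => by abel

end

theorem strang_splitting_error_general (n : ℕ)
    (A B : Matrix (Fin n) (Fin n) ℂ) :
    ∃ C > (0 : ℝ), ∃ t₀ > (0 : ℝ), ∀ t : ℝ, |t| ≤ t₀ →
      ‖NormedSpace.exp ((t : ℂ) • (A + B)) -
        NormedSpace.exp (((t : ℂ) / 2) • B) * NormedSpace.exp ((t : ℂ) • A) *
          NormedSpace.exp (((t : ℂ) / 2) • B)‖ ≤ C * |t| ^ 3 := by
  obtain ⟨C, hC, hbound⟩ := ((exp_smul_add_sub_strang_isBigO A B).comp_tendsto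
    (Complex.continuous_ofReal.tendsto' 0 0 Complex.ofReal_zero)).exists_pos
  obtain ⟨ε, hε, hball⟩ := Metric.eventually_nhds_iff.1 hbound.bound
  refine ⟨C, hC, ε / 2, half_pos hε, fun t ht => ?_⟩
  simpa using hball (show dist t 0 < ε by rw [Real.dist_0_eq_abs]; linarith)

/-- **Symmetric (Strang) operator-exponential splitting is third-order accurate.**
For `n ≥ 1` and `n × n` complex matrices `A`, `B`, there are `C > 0` and `t₀ > 0` with
`‖exp(t(A+B)) − exp((t/2)B)·exp(tA)·exp((t/2)B)‖ ≤ C·|t|³` for all real `|t| ≤ t₀`,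
where `‖·‖` is the operator norm induced by the Euclidean norm on `ℂⁿ`. -/
theorem strang_splitting_error (n : ℕ) (hn : 1 ≤ n)
    (A B : Matrix (Fin n) (Fin n) ℂ) :
    ∃ C > (0 : ℝ), ∃ t₀ > (0 : ℝ), ∀ t : ℝ, |t| ≤ t₀ →
      ‖NormedSpace.exp ((t : ℂ) • (A + B)) -
        NormedSpace.exp (((t : ℂ) / 2) • B) * NormedSpace.exp ((t : ℂ) • A) *
          NormedSpace.exp (((t : ℂ) / 2) • B)‖ ≤ C * |t| ^ 3 :=
  strang_splitting_error_general n A B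
end

section
/- Let n ≥ 1, let A be an n×n complex matrix, and let g ∈ ℂⁿ. For all sufficiently small t > 0 the matrix I − (t/2)A is invertible, and the one-step error of the Crank–Nicolson scheme δ₂(t,g) = ‖exp(tA)g − (I + (t/2)A)·(I − (t/2)A)⁻¹ g‖ satisfies δ₂(t,g) = (t³/12)·‖A³g‖ + O(t⁴); that is, there exist constants C > 0 and t₀ > 0 such that for all t with 0 < t ≤ t₀, I − (t/2)A is invertible and |δ₂(t,g) − (t³/12)·‖A³g‖| ≤ C·t⁴. -/
/-!
With `c = x / 2` and `R = (1 - c)⁻¹ = 1 + c + c² + c³ + c⁴ R`, the Crank–Nicolson factor is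
`(1 + c) R = 2 R - 1 = 1 + x + x² / 2 + x³ / 4 + 2 c⁴ R`. It matches the Taylor polynomial of
`exp x` up to degree two and exceeds it by `x³ / 12` in degree three, while the Taylor remainder of
`exp` and `2 c⁴ R` are both `O(‖x‖⁴)` in any Banach algebra. For `x = t A`, with matrices normed as
operators on `ℂⁿ`, the reverse triangle inequality turns this into the estimate on vectors.
-/

open NormedSpace Nat

theorem Ring.one_add_mul_inverse_one_sub {R : Type*} [Ring R] {c : R} (h : IsUnit (1 - c)) :
    (1 + c) * Ring.inverse (1 - c) = 2 * Ring.inverse (1 - c) - 1 := by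
  calc (1 + c) * Ring.inverse (1 - c)
      = 2 * Ring.inverse (1 - c) - (1 - c) * Ring.inverse (1 - c) := by noncomm_ring
    _ = 2 * Ring.inverse (1 - c) - 1 := by rw [Ring.mul_inverse_cancel _ h]

theorem NormedRing.norm_inverse_one_sub_le {R : Type*} [NormedRing R] [HasSummableGeomSeries R]
    {c : R} (hc : ‖c‖ ≤ 1 / 2) : ‖Ring.inverse (1 - c)‖ ≤ ‖(1 : R)‖ + 1 := by
  have hc1 : ‖c‖ < 1 := by linarith
  rw [NormedRing.inverse_one_sub _ hc1]
  refine (tsum_geometric_le_of_norm_lt_one c hc1).trans ?_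
  have : (1 - ‖c‖)⁻¹ ≤ 2 := by rw [inv_le_comm₀ (by linarith) two_pos]; linarith
  linarith

theorem abs_norm_sub_mul_norm_le {𝕜 E : Type*} [RCLike 𝕜] [NormedAddCommGroup E]
    [NormedSpace 𝕜 E] (u w : E) {s : ℝ} (hs : 0 ≤ s) : |‖u‖ - s * ‖w‖| ≤ ‖u + (s : 𝕜) • w‖ := by
  have := abs_norm_sub_norm_le u (-((s : 𝕜) • w))
  rwa [norm_neg, norm_smul, RCLike.norm_ofReal, abs_of_nonneg hs, sub_neg_eq_add] at this

section BanachAlgebra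

variable {𝕂 𝔸 : Type*} [RCLike 𝕂] [NormedRing 𝔸] [NormedAlgebra 𝕂 𝔸] [CompleteSpace 𝔸]

variable (𝕂) in
theorem norm_exp_sub_sum_range_le (x : 𝔸) {n : ℕ} (hn : 0 < n) :
    ‖exp x - ∑ i ∈ Finset.range n, (i ! : 𝕂)⁻¹ • x ^ i‖ ≤ ‖x‖ ^ n * Real.exp ‖x‖ := by
  rw [← (exp_series_hasSum_exp' (𝕂 := 𝕂) x).tsum_eq,
    ← (expSeries_summable' (𝕂 := 𝕂) x).sum_add_tsum_nat_add n, add_sub_cancel_left,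
    Real.exp_eq_exp_ℝ]
  refine tsum_of_norm_bounded ((expSeries_div_hasSum_exp ‖x‖).mul_left (‖x‖ ^ n)) fun i => ?_
  have hfact : ((i ! : ℕ) : ℝ) ≤ (i + n)! := by exact_mod_cast factorial_le (by omega)
  calc ‖((i + n)! : 𝕂)⁻¹ • x ^ (i + n)‖ ≤ ((i + n)! : ℝ)⁻¹ * ‖x‖ ^ (i + n) := by
        rw [norm_smul, norm_inv, RCLike.norm_natCast]
        gcongr
        exact norm_pow_le' x (by omega)
    _ ≤ ‖x‖ ^ n * (‖x‖ ^ i / i !) := by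
        rw [pow_add, div_eq_mul_inv]
        have := inv_anti₀ (by positivity) hfact
        have : 0 ≤ ‖x‖ ^ i * ‖x‖ ^ n := by positivity
        nlinarith

theorem norm_exp_sub_crankNicolson_add_le {x : 𝔸} (hx : ‖x‖ ≤ 1) :
    ‖exp x - (1 + (2⁻¹ : 𝕂) • x) * Ring.inverse (1 - (2⁻¹ : 𝕂) • x) + (12⁻¹ : 𝕂) • x ^ 3‖ ≤
      (Real.exp 1 + (‖(1 : 𝔸)‖ + 1) / 8) * ‖x‖ ^ 4 := by
  set c : 𝔸 := (2⁻¹ : 𝕂) • x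
  have hc : ‖c‖ = ‖x‖ / 2 := by simp [c, norm_smul, div_eq_inv_mul]
  have hc1 : ‖c‖ < 1 := by rw [hc]; linarith
  have taylor : exp x - (1 + c) * Ring.inverse (1 - c) + (12⁻¹ : 𝕂) • x ^ 3 =
      (exp x - ∑ i ∈ Finset.range 4, (i ! : 𝕂)⁻¹ • x ^ i) -
        (2 : 𝕂) • (c ^ 4 * Ring.inverse (1 - c)) := by
    rw [Ring.one_add_mul_inverse_one_sub (Units.oneSub c hc1).isUnit]
    conv_lhs => rw [NormedRing.inverse_one_sub_nth_order' 4 hc1]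
    generalize Ring.inverse (1 - c) = v
    simp only [Finset.sum_range_succ, Finset.sum_range_zero, c, smul_pow]
    norm_num [factorial, two_mul]
    module
  have hrem : ‖c ^ 4 * Ring.inverse (1 - c)‖ ≤ (‖x‖ / 2) ^ 4 * (‖(1 : 𝔸)‖ + 1) :=
    calc ‖c ^ 4 * Ring.inverse (1 - c)‖ ≤ ‖c‖ ^ 4 * ‖Ring.inverse (1 - c)‖ :=
          (norm_mul_le _ _).trans (by gcongr; exact norm_pow_le' c (by norm_num))
      _ ≤ (‖x‖ / 2) ^ 4 * (‖(1 : 𝔸)‖ + 1) := by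
          rw [hc]
          gcongr
          exact NormedRing.norm_inverse_one_sub_le (by rw [hc]; linarith)
  calc _ = ‖(exp x - ∑ i ∈ Finset.range 4, (i ! : 𝕂)⁻¹ • x ^ i) -
        (2 : 𝕂) • (c ^ 4 * Ring.inverse (1 - c))‖ := by rw [taylor]
    _ ≤ ‖x‖ ^ 4 * Real.exp ‖x‖ + 2 * ((‖x‖ / 2) ^ 4 * (‖(1 : 𝔸)‖ + 1)) := by
        refine (norm_sub_le _ _).trans (add_le_add (norm_exp_sub_sum_range_le 𝕂 x four_pos) ?_)
        rw [norm_smul, RCLike.norm_ofNat]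
        gcongr
    _ ≤ (Real.exp 1 + (‖(1 : 𝔸)‖ + 1) / 8) * ‖x‖ ^ 4 := by
        have : Real.exp ‖x‖ ≤ Real.exp 1 := Real.exp_le_exp.2 hx
        have : 0 ≤ ‖x‖ ^ 4 := by positivity
        nlinarith

theorem crankNicolson_step_isUnit_and_error_le {B : 𝔸} {t : ℝ} (ht : 0 ≤ t)
    (htB : t * ‖B‖ ≤ 1) :
    IsUnit (1 - ((t : 𝕂) / 2) • B) ∧
      ‖exp ((t : 𝕂) • B) - (1 + ((t : 𝕂) / 2) • B) * Ring.inverse (1 - ((t : 𝕂) / 2) • B) +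
          ((t : 𝕂) ^ 3 / 12) • B ^ 3‖ ≤
        (Real.exp 1 + (‖(1 : 𝔸)‖ + 1) / 8) * ‖B‖ ^ 4 * t ^ 4 := by
  have hx : ‖(t : 𝕂) • B‖ = t * ‖B‖ := by
    rw [norm_smul, RCLike.norm_ofReal, abs_of_nonneg ht]
  have hhalf : ((t : 𝕂) / 2) • B = (2⁻¹ : 𝕂) • ((t : 𝕂) • B) := by
    rw [smul_smul, div_eq_inv_mul]
  have hc : ‖((t : 𝕂) / 2) • B‖ < 1 := by
    rw [hhalf, norm_smul, hx, norm_inv, RCLike.norm_ofNat]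
    linarith
  refine ⟨(Units.oneSub _ hc).isUnit, ?_⟩
  have hE := norm_exp_sub_crankNicolson_add_le (𝕂 := 𝕂) (hx.trans_le htB)
  rwa [← hhalf, smul_pow, smul_smul, inv_mul_eq_div, hx, mul_pow, ← mul_assoc,
    mul_right_comm _ (t ^ 4)] at hE

end BanachAlgebra

theorem crank_nicolson_one_step_error_general (n : ℕ)
    (A : Matrix (Fin n) (Fin n) ℂ) (g : EuclideanSpace ℂ (Fin n)) :
    ∃ C > (0 : ℝ), ∃ t₀ > (0 : ℝ), ∀ t : ℝ, 0 < t → t ≤ t₀ →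
      IsUnit (1 - ((t : ℂ) / 2) • A) ∧
      |‖Matrix.toEuclideanLin (NormedSpace.exp ((t : ℂ) • A)) g -
          Matrix.toEuclideanLin ((1 + ((t : ℂ) / 2) • A) * (1 - ((t : ℂ) / 2) • A)⁻¹) g‖ -
        t ^ 3 / 12 * ‖Matrix.toEuclideanLin (A * A * A) g‖| ≤ C * t ^ 4 := by
  let _ : NormedRing (Matrix (Fin n) (Fin n) ℂ) := Matrix.instL2OpNormedRing
  let _ : NormedAlgebra ℂ (Matrix (Fin n) (Fin n) ℂ) := Matrix.instL2OpNormedAlgebra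
  have : CompleteSpace (Matrix (Fin n) (Fin n) ℂ) := FiniteDimensional.complete ℂ _
  set K := Real.exp 1 + (‖(1 : Matrix (Fin n) (Fin n) ℂ)‖ + 1) / 8
  refine ⟨K * ‖A‖ ^ 4 * ‖g‖ + 1, by positivity, (‖A‖ + 1)⁻¹, by positivity, fun t ht htt₀ => ?_⟩
  have htA : t * ‖A‖ ≤ 1 :=
    calc t * ‖A‖ ≤ (‖A‖ + 1)⁻¹ * ‖A‖ := by gcongr
      _ ≤ 1 := by rw [inv_mul_le_iff₀ (by positivity)]; linarith
  obtain ⟨hunit, hE⟩ := crankNicolson_step_isUnit_and_error_le (𝕂 := ℂ) ht.le htA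
  refine ⟨hunit, ?_⟩
  rw [Matrix.nonsing_inv_eq_ringInverse]
  calc _ ≤ ‖_ + ((t ^ 3 / 12 : ℝ) : ℂ) • Matrix.toEuclideanLin (A * A * A) g‖ :=
        abs_norm_sub_mul_norm_le _ _ (by positivity : (0 : ℝ) ≤ t ^ 3 / 12)
    _ = ‖Matrix.toEuclideanLin (exp ((t : ℂ) • A) - (1 + ((t : ℂ) / 2) • A) *
          Ring.inverse (1 - ((t : ℂ) / 2) • A) + ((t : ℂ) ^ 3 / 12) • A ^ 3) g‖ := by
        simp [pow_three, mul_assoc]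
    _ ≤ K * ‖A‖ ^ 4 * t ^ 4 * ‖g‖ := (Matrix.l2_opNorm_mulVec _ g).trans (by gcongr; exact hE)
    _ ≤ (K * ‖A‖ ^ 4 * ‖g‖ + 1) * t ^ 4 := by nlinarith [pow_pos ht 4]

/-- **One-step error of the Crank–Nicolson scheme, with its leading term.**
For all sufficiently small `t > 0` the matrix `I − (t/2)A` is invertible and
`δ₂(t,g) = ‖exp(tA)g − (I + (t/2)A)·(I − (t/2)A)⁻¹ g‖` satisfies
`δ₂(t,g) = (t³/12)·‖A³g‖ + O(t⁴)`, where `‖·‖` is the Euclidean norm on `ℂⁿ`. -/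
theorem crank_nicolson_one_step_error (n : ℕ) (hn : 1 ≤ n)
    (A : Matrix (Fin n) (Fin n) ℂ) (g : EuclideanSpace ℂ (Fin n)) :
    ∃ C > (0 : ℝ), ∃ t₀ > (0 : ℝ), ∀ t : ℝ, 0 < t → t ≤ t₀ →
      IsUnit (1 - ((t : ℂ) / 2) • A) ∧
      |‖Matrix.toEuclideanLin (NormedSpace.exp ((t : ℂ) • A)) g -
          Matrix.toEuclideanLin ((1 + ((t : ℂ) / 2) • A) * (1 - ((t : ℂ) / 2) • A)⁻¹) g‖ -
        t ^ 3 / 12 * ‖Matrix.toEuclideanLin (A * A * A) g‖| ≤ C * t ^ 4 :=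
  crank_nicolson_one_step_error_general n A g
end

section
/- Let n ≥ 1 and let A and B be n×n complex matrices such that Re⟨(A+B)g, g⟩ < 0 for every nonzero g ∈ ℂⁿ. Then for every g ∈ ℂⁿ there exists t₀ > 0 such that for all t with 0 < t ≤ t₀ one has ‖exp(tA)·exp(tB)·g‖ ≤ ‖g‖; i.e., the first-order operator-exponential scheme S₁(t) = exp(tA)exp(tB) is stable for sufficiently small positive time steps. -/
/-!
Put `v t = exp(tA) exp(tB) g`. Then `v 0 = g` and `v' 0 = (A + B) g`, so the derivative of
`‖v t‖²` at `t = 0` is `2 Re⟨g, (A + B) g⟩ < 0`; hence `‖v t‖ < ‖g‖` for all small `t > 0`.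
-/

open NormedSpace Filter Topology
open scoped InnerProductSpace

theorem HasDerivAt.eventually_lt_of_neg {φ : ℝ → ℝ} {d x : ℝ} (hφ : HasDerivAt φ d x)
    (hd : d < 0) : ∀ᶠ t in 𝓝[>] x, φ t < φ x := by
  have hslope : ∀ᶠ t in 𝓝[>] x, slope φ x t < 0 :=
    hφ.hasDerivWithinAt.limsup_slope_le' (lt_irrefl x) hd
  filter_upwards [hslope, self_mem_nhdsWithin] with t hneg (hxt : x < t)
  have hmul : (t - x) * slope φ x t < 0 := mul_neg_of_pos_of_neg (sub_pos.2 hxt) hneg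
  rw [← smul_eq_mul, sub_smul_slope, vsub_eq_sub] at hmul
  linarith

theorem HasDerivAt.eventually_norm_lt_of_re_inner_neg {𝕜 E : Type*} [RCLike 𝕜]
    [NormedAddCommGroup E] [InnerProductSpace 𝕜 E] [NormedSpace ℝ E] {f : ℝ → E} {f' : E} {x : ℝ}
    (hf : HasDerivAt f f' x) (h : RCLike.re ⟪f x, f'⟫_𝕜 < 0) :
    ∀ᶠ t in 𝓝[>] x, ‖f t‖ < ‖f x‖ := by
  have hsq : HasDerivAt (fun t => ‖f t‖ ^ 2) (RCLike.re (⟪f x, f'⟫_𝕜 + ⟪f', f x⟫_𝕜)) x := by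
    simpa [Function.comp_def] using
      (RCLike.reCLM (K := 𝕜)).hasFDerivAt.comp_hasDerivAt x (hf.inner 𝕜 hf)
  have hd : RCLike.re (⟪f x, f'⟫_𝕜 + ⟪f', f x⟫_𝕜) < 0 := by
    rw [map_add, ← inner_conj_symm f' (f x), RCLike.conj_re]
    linarith
  filter_upwards [hsq.eventually_lt_of_neg hd] with t ht
  exact lt_of_pow_lt_pow_left₀ 2 (norm_nonneg _) ht

theorem hasDerivAt_exp_smul_mul_exp_smul {𝕂 𝔸 : Type*} [RCLike 𝕂] [NormedRing 𝔸]
    [NormedAlgebra 𝕂 𝔸] [CompleteSpace 𝔸] (a b : 𝔸) :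
    HasDerivAt (fun u : 𝕂 => exp (u • a) * exp (u • b)) (a + b) 0 := by
  simpa [Pi.mul_def] using
    (hasDerivAt_exp_smul_const a (0 : 𝕂)).mul (hasDerivAt_exp_smul_const b (0 : 𝕂))

theorem HasDerivAt.vector_comp_ofReal {E : Type*} [NormedAddCommGroup E] [NormedSpace ℂ E]
    {e : ℂ → E} {e' : E} {z : ℝ} (he : HasDerivAt e e' z) :
    HasDerivAt (fun y : ℝ => e y) e' z := by
  simpa [Function.comp_def] using he.scomp z Complex.ofRealCLM.hasDerivAt

section

-- Any norm would do; this one makes square matrices a complete normed `ℂ`-algebra.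
open scoped Matrix.Norms.L2Operator

theorem Matrix.hasDerivAt_toEuclideanLin_exp_smul_mul_exp_smul_apply {n : Type*} [Fintype n]
    [DecidableEq n] (A B : Matrix n n ℂ) (g : EuclideanSpace ℂ n) :
    HasDerivAt (fun t : ℝ => toEuclideanLin (exp ((t : ℂ) • A) * exp ((t : ℂ) • B)) g)
      (toEuclideanLin (A + B) g) 0 := by
  let L : Matrix n n ℂ →L[ℂ] EuclideanSpace ℂ n :=
    LinearMap.toContinuousLinearMap (LinearMap.applyₗ g ∘ₗ toEuclideanLin.toLinearMap)
  have hL := L.hasFDerivAt.comp_hasDerivAt _ (hasDerivAt_exp_smul_mul_exp_smul (𝕂 := ℂ) A B)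
  exact HasDerivAt.vector_comp_ofReal (Complex.ofReal_zero ▸ hL)
end

theorem first_order_scheme_stable_general (n : ℕ)
    (A B : Matrix (Fin n) (Fin n) ℂ)
    (h : ∀ g : EuclideanSpace ℂ (Fin n), g ≠ 0 →
      (inner ℂ (Matrix.toEuclideanLin (A + B) g) g : ℂ).re < 0) :
    ∀ g : EuclideanSpace ℂ (Fin n), ∃ t₀ > (0 : ℝ), ∀ t : ℝ, 0 < t → t ≤ t₀ →
      ‖Matrix.toEuclideanLin
          (NormedSpace.exp ((t : ℂ) • A) * NormedSpace.exp ((t : ℂ) • B)) g‖ ≤ ‖g‖ := by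
  intro g
  rcases eq_or_ne g 0 with rfl | hg
  · exact ⟨1, one_pos, fun t _ _ => by simp⟩
  set v : ℝ → EuclideanSpace ℂ (Fin n) := fun t =>
    Matrix.toEuclideanLin (exp ((t : ℂ) • A) * exp ((t : ℂ) • B)) g
  have hv0 : v 0 = g := by simp [v]
  have hderiv : HasDerivAt v (Matrix.toEuclideanLin (A + B) g) 0 :=
    Matrix.hasDerivAt_toEuclideanLin_exp_smul_mul_exp_smul_apply A B g
  have hneg : RCLike.re ⟪v 0, Matrix.toEuclideanLin (A + B) g⟫_ℂ < 0 := by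
    rw [hv0, ← inner_conj_symm, RCLike.conj_re]
    exact h g hg
  obtain ⟨t₀, ht₀, hsub⟩ :=
    mem_nhdsGT_iff_exists_Ioc_subset.1 (hderiv.eventually_norm_lt_of_re_inner_neg hneg)
  refine ⟨t₀, ht₀, fun t ht htt₀ => ?_⟩
  exact (hsub ⟨ht, htt₀⟩).le.trans_eq (congrArg norm hv0)

/-- **Stability of the first-order operator-exponential scheme.**
If `Re⟨(A+B)g, g⟩ < 0` for every nonzero `g ∈ ℂⁿ`, then for every `g` there is `t₀ > 0`
such that `‖exp(tA)·exp(tB)·g‖ ≤ ‖g‖` for all `0 < t ≤ t₀`. -/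
theorem first_order_scheme_stable (n : ℕ) (hn : 1 ≤ n)
    (A B : Matrix (Fin n) (Fin n) ℂ)
    (h : ∀ g : EuclideanSpace ℂ (Fin n), g ≠ 0 →
      (inner ℂ (Matrix.toEuclideanLin (A + B) g) g : ℂ).re < 0) :
    ∀ g : EuclideanSpace ℂ (Fin n), ∃ t₀ > (0 : ℝ), ∀ t : ℝ, 0 < t → t ≤ t₀ →
      ‖Matrix.toEuclideanLin
          (NormedSpace.exp ((t : ℂ) • A) * NormedSpace.exp ((t : ℂ) • B)) g‖ ≤ ‖g‖ :=
  first_order_scheme_stable_general n A B h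
end

section
/- Let n ≥ 1 and let A and B be n×n complex matrices such that Re⟨(A+B)g, g⟩ < 0 for every nonzero g ∈ ℂⁿ. Then for every g ∈ ℂⁿ there exists t₀ > 0 such that for all t with 0 < t ≤ t₀ one has ‖exp((t/2)B)·exp(tA)·exp((t/2)B)·g‖ ≤ ‖g‖; i.e., the symmetric operator-exponential scheme S₂(t) = exp((t/2)B)exp(tA)exp((t/2)B) is stable for sufficiently small positive time steps. -/
/-!
Write `S(t) = exp((t/2)B) exp(tA) exp((t/2)B)` and `u(t) = S(t) g`. Since `S(0) = 1` and
`S'(0) = A + B`, the function `‖u(t)‖²` has derivative `2 Re⟨(A + B)g, g⟩ < 0` at `t = 0`,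
so `‖u(t)‖ < ‖g‖` for all sufficiently small `t > 0`.
-/
open NormedSpace Filter Topology

theorem HasDerivAt.eventually_nhdsGT_lt_of_neg {f : ℝ → ℝ} {f' x : ℝ} (hf : HasDerivAt f f' x)
    (hf' : f' < 0) : ∀ᶠ y in 𝓝[>] x, f y < f x := by
  filter_upwards [hf.hasDerivWithinAt.limsup_slope_le' (lt_irrefl x) hf', self_mem_nhdsWithin]
    with y hslope (hy : x < y)
  have := sub_smul_slope f x y
  rw [smul_eq_mul, vsub_eq_sub] at this
  nlinarith [mul_neg_of_pos_of_neg (sub_pos.2 hy) hslope]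

theorem eventually_nhdsGT_norm_lt_of_hasDerivAt {𝕜 E : Type*} [RCLike 𝕜] [NormedAddCommGroup E]
    [InnerProductSpace 𝕜 E] [NormedSpace ℝ E] {u : ℝ → E} {v : E} {x : ℝ} (hu : HasDerivAt u v x)
    (hv : RCLike.re (inner 𝕜 v (u x)) < 0) : ∀ᶠ t in 𝓝[>] x, ‖u t‖ < ‖u x‖ := by
  have hsq : HasDerivAt (fun t => ‖u t‖ ^ 2) (2 * RCLike.re (inner 𝕜 v (u x))) x := by
    have h := (RCLike.reCLM (K := 𝕜)).hasFDerivAt.comp_hasDerivAt x (hu.inner 𝕜 hu)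
    simp only [Function.comp_def, RCLike.reCLM_apply, inner_self_eq_norm_sq, map_add] at h
    rwa [inner_re_symm (u x) v, ← two_mul] at h
  filter_upwards [hsq.eventually_nhdsGT_lt_of_neg (by linarith)] with t ht
  exact (pow_lt_pow_iff_left₀ (norm_nonneg _) (norm_nonneg _) two_ne_zero).1 ht

section StrangSplitting

variable {𝔸 : Type*} [NormedRing 𝔸] [NormedAlgebra ℝ 𝔸]

noncomputable def strangSplitting (X Y : 𝔸) (t : ℝ) : 𝔸 :=
  exp ((t / 2) • X) * exp (t • Y) * exp ((t / 2) • X)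

@[simp]
theorem strangSplitting_zero (X Y : 𝔸) : strangSplitting X Y 0 = 1 := by
  simp [strangSplitting]

variable [CompleteSpace 𝔸]

theorem hasDerivAt_exp_smul_zero (X : 𝔸) : HasDerivAt (fun t : ℝ => exp (t • X)) X 0 := by
  simpa using hasDerivAt_exp_smul_const X (0 : ℝ)

theorem hasDerivAt_strangSplitting_zero (X Y : 𝔸) :
    HasDerivAt (strangSplitting X Y) (X + Y) 0 := by
  have hhalf : HasDerivAt (fun t : ℝ => exp ((t / 2) • X)) ((2⁻¹ : ℝ) • X) 0 := by
    simpa only [smul_smul, div_eq_mul_inv] using hasDerivAt_exp_smul_zero ((2⁻¹ : ℝ) • X)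
  refine ((hhalf.mul (hasDerivAt_exp_smul_zero Y)).mul hhalf).congr_deriv ?_
  simp only [Pi.mul_apply, zero_div, zero_smul, exp_zero, one_mul, mul_one]
  module

end StrangSplitting

namespace Matrix

open scoped Norms.L2Operator

variable {ι : Type*} [Fintype ι] [DecidableEq ι]

theorem hasDerivAt_toEuclideanLin_strangSplitting (X Y : Matrix ι ι ℂ)
    (g : EuclideanSpace ℂ ι) :
    HasDerivAt (fun t => toEuclideanLin (strangSplitting X Y t) g) (toEuclideanLin (X + Y) g) 0 :=
  let evalAt : Matrix ι ι ℂ →L[ℂ] EuclideanSpace ℂ ι :=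
    LinearMap.toContinuousLinearMap ((LinearMap.applyₗ g).comp toEuclideanLin.toLinearMap)
  (evalAt.restrictScalars ℝ).hasFDerivAt.comp_hasDerivAt 0 (hasDerivAt_strangSplitting_zero X Y)

theorem eventually_norm_toEuclideanLin_strangSplitting_lt {X Y : Matrix ι ι ℂ}
    {g : EuclideanSpace ℂ ι} (hg : (inner ℂ (toEuclideanLin (X + Y) g) g).re < 0) :
    ∀ᶠ t in 𝓝[>] 0, ‖toEuclideanLin (strangSplitting X Y t) g‖ < ‖g‖ := by
  have h := eventually_nhdsGT_norm_lt_of_hasDerivAt (𝕜 := ℂ)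
    (hasDerivAt_toEuclideanLin_strangSplitting X Y g)
  simp only [strangSplitting_zero, toLpLin_one, LinearMap.id_coe, id_eq] at h
  exact h hg

end Matrix

theorem symmetric_scheme_stable_general (n : ℕ)
    (A B : Matrix (Fin n) (Fin n) ℂ)
    (h : ∀ g : EuclideanSpace ℂ (Fin n), g ≠ 0 →
      (inner ℂ (Matrix.toEuclideanLin (A + B) g) g : ℂ).re < 0) :
    ∀ g : EuclideanSpace ℂ (Fin n), ∃ t₀ > (0 : ℝ), ∀ t : ℝ, 0 < t → t ≤ t₀ →
      ‖Matrix.toEuclideanLin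
          (NormedSpace.exp (((t : ℂ) / 2) • B) * NormedSpace.exp ((t : ℂ) • A) *
            NormedSpace.exp (((t : ℂ) / 2) • B)) g‖ ≤ ‖g‖ := by
  intro g
  obtain rfl | hg := eq_or_ne g 0
  · exact ⟨1, one_pos, fun t _ _ => by simp⟩
  obtain ⟨t₀, ht₀, hdecay⟩ := mem_nhdsGT_iff_exists_Ioc_subset.1 <|
    Matrix.eventually_norm_toEuclideanLin_strangSplitting_lt (add_comm A B ▸ h g hg)
  refine ⟨t₀, ht₀, fun t ht htt => ?_⟩
  rw [show (t : ℂ) / 2 = ((t / 2 : ℝ) : ℂ) by push_cast; ring, Complex.coe_smul, Complex.coe_smul]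
  exact (hdecay ⟨ht, htt⟩).le

/-- **Stability of the symmetric operator-exponential scheme.**
If `Re⟨(A+B)g, g⟩ < 0` for every nonzero `g ∈ ℂⁿ`, then for every `g` there is `t₀ > 0`
such that `‖exp((t/2)B)·exp(tA)·exp((t/2)B)·g‖ ≤ ‖g‖` for all `0 < t ≤ t₀`. -/
theorem symmetric_scheme_stable (n : ℕ) (hn : 1 ≤ n)
    (A B : Matrix (Fin n) (Fin n) ℂ)
    (h : ∀ g : EuclideanSpace ℂ (Fin n), g ≠ 0 →
      (inner ℂ (Matrix.toEuclideanLin (A + B) g) g : ℂ).re < 0) :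
    ∀ g : EuclideanSpace ℂ (Fin n), ∃ t₀ > (0 : ℝ), ∀ t : ℝ, 0 < t → t ≤ t₀ →
      ‖Matrix.toEuclideanLin
          (NormedSpace.exp (((t : ℂ) / 2) • B) * NormedSpace.exp ((t : ℂ) • A) *
            NormedSpace.exp (((t : ℂ) / 2) • B)) g‖ ≤ ‖g‖ :=
  symmetric_scheme_stable_general n A B h
end

section
/- Let N ≥ 3. Let Δ_D be the N×N Dirichlet difference Laplacian ((Δ_D f)(k) = f(k−1) − 2f(k) + f(k+1) for 1 ≤ k ≤ N−2, (Δ_D f)(0) = −3f(0) + f(1), (Δ_D f)(N−1) = f(N−2) − 3f(N−1)) and let Δ_L be the periodic difference Laplacian ((Δ_L f)(x) = f((x−1) mod N) − 2f(x) + f((x+1) mod N)). Let Q₀ be the orthogonal projection of ℂ^N onto the span of the unit vector x₀ = (e₀ + e_{N−1})/√2, where e_j is the standard basis. Then the boundary perturbation operator satisfies Δ_D − Δ_L = −2 Q₀, and consequently for every real t, exp((t/2)(Δ_D − Δ_L)) = I + (e^{−t} − 1) Q₀. -/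
/-!
The Dirichlet and periodic Laplacians differ only in rows `0` and `N - 1`, where the periodic
one couples the two boundary sites across the wrap-around: `(Δ_D - Δ_L) f = -(f 0 + f (N-1)) •
(e₀ + e_{N-1}) = -2 Q₀ f`. As `Q₀` is idempotent, `(c • Q₀)ⁿ = cⁿ • Q₀` for `n ≥ 1`, so the
exponential series of `c • Q₀` collapses to `1 + (eᶜ - 1) • Q₀`.
-/
open NormedSpace Nat
open scoped Matrix ComplexConjugate

theorem IsIdempotentElem.exp_smul {𝕂 𝔸 : Type*} [RCLike 𝕂] [NormedRing 𝔸] [NormedAlgebra 𝕂 𝔸]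
    [CompleteSpace 𝔸] {P : 𝔸} (hP : IsIdempotentElem P) (c : 𝕂) :
    exp (c • P) = 1 + (exp c - 1) • P := by
  have hterm : ∀ n : ℕ, (n !⁻¹ : 𝕂) • (c • P) ^ n
      = ((n !⁻¹ : 𝕂) • c ^ n) • P + if n = 0 then 1 - P else 0 := by
    rintro (_ | n)
    · simp
    · rw [smul_pow, hP.pow_succ_eq, smul_smul, if_neg n.succ_ne_zero, add_zero, smul_eq_mul]
  have hsum : HasSum (fun n : ℕ => (n !⁻¹ : 𝕂) • (c • P) ^ n) (exp c • P + (1 - P)) := by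
    simp only [hterm]
    exact ((exp_series_hasSum_exp' (𝕂 := 𝕂) c).smul_const P).add (hasSum_ite_eq 0 (1 - P))
  rw [(exp_series_hasSum_exp' (c • P)).unique hsum]
  module

theorem Matrix.exp_smul_of_isIdempotentElem {n 𝕂 : Type*} [Fintype n] [DecidableEq n]
    [RCLike 𝕂] {P : Matrix n n 𝕂} (hP : IsIdempotentElem P) (c : 𝕂) :
    exp (c • P) = 1 + (exp c - 1) • P :=
  open scoped Matrix.Norms.Operator in hP.exp_smul c

theorem Fin.val_eq_sub_one_iff_eq_neg_one {N : ℕ} [NeZero N] {k : Fin N} :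
    (k : ℕ) = N - 1 ↔ k = -1 := by
  obtain ⟨n, rfl⟩ := Nat.exists_eq_succ_of_ne_zero (NeZero.ne N)
  simp [Fin.ext_iff, Fin.coe_neg_one]

theorem Matrix.isIdempotentElem_of_mulVec_eq_dotProduct_smul {n R : Type*} [Fintype n]
    [CommSemiring R] {Q : Matrix n n R} {w v : n → R} (hwv : w ⬝ᵥ v = 1)
    (hQ : ∀ f, Q *ᵥ f = (w ⬝ᵥ f) • v) : IsIdempotentElem Q := by
  refine Matrix.ext_iff_mulVec.mpr fun f => ?_
  rw [← Matrix.mulVec_mulVec, hQ f, Matrix.mulVec_smul, hQ v, hwv, one_smul]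

section PairVector
variable {n : Type*} [Fintype n] [DecidableEq n] {a b : n} {x : n → ℂ}

theorem sum_conj_mul_eq_of_eq_pair_div_sqrt_two
    (hx : ∀ j, x j = ((if j = a then 1 else 0) + (if j = b then 1 else 0)) / Real.sqrt 2)
    (f : n → ℂ) : ∑ j, conj (x j) * f j = (f a + f b) / Real.sqrt 2 := by
  simp [hx, add_mul, div_mul_eq_mul_div, Finset.sum_add_distrib, ← Finset.sum_div, add_div]

theorem sum_conj_mul_self_eq_one_of_eq_pair_div_sqrt_two (hab : a ≠ b)
    (hx : ∀ j, x j = ((if j = a then 1 else 0) + (if j = b then 1 else 0)) / Real.sqrt 2) :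
    ∑ j, conj (x j) * x j = 1 := by
  have h2 : ((Real.sqrt 2 : ℝ) : ℂ) ^ 2 = 2 := by norm_cast; simp
  rw [sum_conj_mul_eq_of_eq_pair_div_sqrt_two hx, hx, hx]
  simp only [↓reduceIte, hab, hab.symm, add_zero, zero_add]
  field_simp
  rw [h2, one_add_one_eq_two]

theorem mulVec_apply_of_eq_pair_projection
    (hx : ∀ j, x j = ((if j = a then 1 else 0) + (if j = b then 1 else 0)) / Real.sqrt 2)
    {Q : Matrix n n ℂ} (hQ : ∀ f : n → ℂ, Q *ᵥ f = (∑ j, conj (x j) * f j) • x)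
    (f : n → ℂ) (k : n) :
    (Q *ᵥ f) k = (f a + f b) * ((if k = a then 1 else 0) + (if k = b then 1 else 0)) / 2 := by
  have h2 : ((Real.sqrt 2 : ℝ) : ℂ) ^ 2 = 2 := by norm_cast; simp
  rw [hQ, sum_conj_mul_eq_of_eq_pair_div_sqrt_two hx, Pi.smul_apply, hx, smul_eq_mul, ← h2]
  ring

end PairVector

theorem dirichlet_sub_periodic_mulVec_apply {N : ℕ} [NeZero N] (h0 : (0 : Fin N) ≠ -1)
    {ΔD ΔL : Matrix (Fin N) (Fin N) ℂ}
    (hΔD : ∀ f : Fin N → ℂ, ∀ k : Fin N, (ΔD *ᵥ f) k =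
      if k = 0 then -3 * f k + f (k + 1)
      else if k = -1 then f (k - 1) - 3 * f k
      else f (k - 1) - 2 * f k + f (k + 1))
    (hΔL : ∀ f : Fin N → ℂ, ∀ k : Fin N, (ΔL *ᵥ f) k = f (k - 1) - 2 * f k + f (k + 1))
    (f : Fin N → ℂ) (k : Fin N) :
    ((ΔD - ΔL) *ᵥ f) k =
      -(f 0 + f (-1)) * ((if k = 0 then 1 else 0) + (if k = -1 then 1 else 0)) := by
  rw [Matrix.sub_mulVec, Pi.sub_apply, hΔD, hΔL]
  rcases eq_or_ne k 0 with rfl | hk0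
  · simp only [↓reduceIte, h0, zero_sub]
    ring
  rcases eq_or_ne k (-1) with rfl | hk1
  · simp only [↓reduceIte, hk0, neg_add_cancel]
    ring
  simp [hk0, hk1]

/-- **The Dirichlet Laplacian as a rank-one perturbation of the periodic one, and the
exponential of the boundary perturbation.** With `Δ_D` the Dirichlet and `Δ_L` the periodic
difference Laplacians, and `Q₀` the orthogonal projection onto the unit vector
`x₀ = (e₀ + e_{N−1})/√2`, one has `Δ_D − Δ_L = −2Q₀`, and consequently
`exp((t/2)(Δ_D − Δ_L)) = I + (e^{−t} − 1)Q₀` for every real `t`. -/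
theorem dirichlet_minus_periodic (N : ℕ) (hN : 3 ≤ N) [NeZero N]
    (ΔD ΔL Q : Matrix (Fin N) (Fin N) ℂ) (x₀ : Fin N → ℂ)
    (hΔD : ∀ f : Fin N → ℂ, ∀ k : Fin N, ΔD.mulVec f k =
      if (k : ℕ) = 0 then -3 * f k + f (k + 1)
      else if (k : ℕ) = N - 1 then f (k - 1) - 3 * f k
      else f (k - 1) - 2 * f k + f (k + 1))
    (hΔL : ∀ f : Fin N → ℂ, ∀ x : Fin N,
      ΔL.mulVec f x = f (x - 1) - 2 * f x + f (x + 1))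
    (hx₀ : ∀ j : Fin N, x₀ j =
      ((if (j : ℕ) = 0 then 1 else 0) + (if (j : ℕ) = N - 1 then 1 else 0)) / Real.sqrt 2)
    (hQ : ∀ f : Fin N → ℂ, Q.mulVec f = (∑ j, (starRingEnd ℂ) (x₀ j) * f j) • x₀) :
    ΔD - ΔL = (-2 : ℂ) • Q ∧
    ∀ t : ℝ, NormedSpace.exp (((t : ℂ) / 2) • (ΔD - ΔL)) =
      1 + ((Real.exp (-t) - 1 : ℝ) : ℂ) • Q := by
  simp only [Fin.val_eq_zero_iff, Fin.val_eq_sub_one_iff_eq_neg_one] at hΔD hx₀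
  have h0 : (0 : Fin N) ≠ -1 := fun h => by
    have := Fin.val_eq_sub_one_iff_eq_neg_one.mpr h
    simp only [Fin.val_zero] at this
    omega
  have hdiff : ΔD - ΔL = (-2 : ℂ) • Q := by
    refine Matrix.ext_iff_mulVec.mpr fun f => funext fun k => ?_
    rw [dirichlet_sub_periodic_mulVec_apply h0 hΔD hΔL, Matrix.smul_mulVec, Pi.smul_apply,
      mulVec_apply_of_eq_pair_projection hx₀ hQ, smul_eq_mul]
    ring
  have hQQ : IsIdempotentElem Q := Matrix.isIdempotentElem_of_mulVec_eq_dotProduct_smul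
    (sum_conj_mul_self_eq_one_of_eq_pair_div_sqrt_two h0 hx₀) hQ
  refine ⟨hdiff, fun t => ?_⟩
  rw [hdiff, smul_smul, show (t : ℂ) / 2 * -2 = -t by ring,
    Matrix.exp_smul_of_isIdempotentElem hQQ, ← Complex.exp_eq_exp_ℂ, Complex.ofReal_sub,
    Complex.ofReal_exp, Complex.ofReal_neg, Complex.ofReal_one]
end

section
/- Let N = 2M with M ≥ 2, and let Δ_D be the N×N Dirichlet difference Laplacian ((Δ_D f)(k) = f(k−1) − 2f(k) + f(k+1) for 1 ≤ k ≤ N−2, (Δ_D f)(0) = −3f(0) + f(1), (Δ_D f)(N−1) = f(N−2) − 3f(N−1)), and let x₀ = (e₀ + e_{N−1})/√2 ∈ ℂ^N. For l = 1,…,M define Ψ_l ∈ ℂ^N by Ψ_l(k) = sin(2πl(k+1/2)/N) and ν_l = −4 sin²(πl/N). Then for every l ∈ {1,…,M}: Ψ_l ≠ 0, Δ_D Ψ_l = ν_l Ψ_l, and ⟨Ψ_l, x₀⟩ = 0; i.e., Ψ_l is an eigenvector of Δ_D orthogonal to the boundary vector x₀. -/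
/-- Interior recurrence for the discrete sine eigenvectors. -/
lemma dirichlet_trig_interior (θ : ℝ) (m : ℕ) :
    Real.sin ((2 * (m : ℝ) + 1) * θ) - 2 * Real.sin ((2 * ((m : ℝ) + 1) + 1) * θ)
      + Real.sin ((2 * ((m : ℝ) + 2) + 1) * θ)
    = (-4 * Real.sin θ ^ 2) * Real.sin ((2 * ((m : ℝ) + 1) + 1) * θ) := by
  have h1 : (2 * (m : ℝ) + 1) * θ = (2 * ((m : ℝ) + 1) + 1) * θ - 2 * θ := by ring
  have h2 : (2 * ((m : ℝ) + 2) + 1) * θ = (2 * ((m : ℝ) + 1) + 1) * θ + 2 * θ := by ring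
  rw [h1, h2, Real.sin_sub, Real.sin_add, Real.cos_two_mul]
  linear_combination 4 * Real.sin ((2 * ((m : ℝ) + 1) + 1) * θ) * Real.sin_sq_add_cos_sq θ

/-- Boundary recurrence: `sin 3θ = (3 - 4 sin² θ) sin θ`. -/
lemma dirichlet_trig_boundary (θ : ℝ) :
    -3 * Real.sin θ + Real.sin (3 * θ) = (-4 * Real.sin θ ^ 2) * Real.sin θ := by
  rw [Real.sin_three_mul]; ring

/-- **Eigenvectors of the Dirichlet difference Laplacian orthogonal to the boundary
vector.** For `N = 2M`, the vectors `Ψ_l(k) = sin(2πl(k+1/2)/N)`, `l = 1, …, M`, are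
nonzero eigenvectors of the Dirichlet difference Laplacian `Δ_D` with eigenvalues
`ν_l = −4 sin²(πl/N)`, and they are orthogonal to `x₀ = (e₀ + e_{N−1})/√2`. -/
theorem dirichlet_eigenvectors_orthogonal_to_boundary (M N : ℕ) (hM : 2 ≤ M)
    (hN : N = 2 * M) [NeZero N]
    (ΔD : Matrix (Fin N) (Fin N) ℂ)
    (hΔD : ∀ f : Fin N → ℂ, ∀ k : Fin N, ΔD.mulVec f k =
      if (k : ℕ) = 0 then -3 * f k + f (k + 1)
      else if (k : ℕ) = N - 1 then f (k - 1) - 3 * f k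
      else f (k - 1) - 2 * f k + f (k + 1))
    (x₀ : Fin N → ℂ)
    (hx₀ : ∀ j : Fin N, x₀ j =
      ((if (j : ℕ) = 0 then 1 else 0) + (if (j : ℕ) = N - 1 then 1 else 0)) / Real.sqrt 2)
    (Ψ : ℕ → Fin N → ℂ) (ν : ℕ → ℝ)
    (hΨ : ∀ l : ℕ, ∀ k : Fin N, Ψ l k =
      ((Real.sin (2 * Real.pi * l * ((k : ℕ) + 1 / 2) / N) : ℝ) : ℂ))
    (hν : ∀ l : ℕ, ν l = -4 * Real.sin (Real.pi * l / N) ^ 2) :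
    ∀ l : ℕ, 1 ≤ l → l ≤ M →
      Ψ l ≠ 0 ∧ ΔD.mulVec (Ψ l) = (ν l : ℂ) • Ψ l ∧
      ∑ k, (starRingEnd ℂ) (Ψ l k) * x₀ k = 0 := by
  intro l hl1 hl2
  have hN4 : 4 ≤ N := by omega
  have hNpos : 0 < N := by omega
  have hNR : (N : ℝ) ≠ 0 := by positivity
  set θ : ℝ := Real.pi * l / N with hθdef
  -- rewrite Ψ in the convenient form
  have hval : ∀ k : Fin N, Ψ l k = ((Real.sin ((2 * (k : ℕ) + 1) * θ) : ℝ) : ℂ) := by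
    intro k
    rw [hΨ]
    congr 1
    congr 1
    rw [hθdef]
    field_simp
  have hπ : 0 < Real.pi := Real.pi_pos
  have hθpos : 0 < θ := by
    rw [hθdef]
    have : (0:ℝ) < l := by exact_mod_cast hl1
    positivity
  have hθlt : θ < Real.pi := by
    rw [hθdef, div_lt_iff₀ (by positivity)]
    have hlN : (l : ℝ) < N := by
      have : l < N := by omega
      exact_mod_cast this
    nlinarith
  have hsinθ : 0 < Real.sin θ := Real.sin_pos_of_pos_of_lt_pi hθpos hθlt
  -- values at the right boundary
  have hNm1 : Real.sin ((2 * ((N - 1 : ℕ) : ℝ) + 1) * θ) = -Real.sin θ := by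
    have hcast : ((N - 1 : ℕ) : ℝ) = (N : ℝ) - 1 := by
      have : (1:ℕ) ≤ N := by omega
      push_cast [this]; ring
    have harg : (2 * ((N - 1 : ℕ) : ℝ) + 1) * θ = -θ + (l : ℤ) * (2 * Real.pi) := by
      rw [hcast, hθdef]; push_cast; field_simp; ring
    rw [harg, Real.sin_add_int_mul_two_pi, Real.sin_neg]
  have hNm2 : Real.sin ((2 * ((N - 2 : ℕ) : ℝ) + 1) * θ) = -Real.sin (3 * θ) := by
    have hcast : ((N - 2 : ℕ) : ℝ) = (N : ℝ) - 2 := by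
      have : (2:ℕ) ≤ N := by omega
      push_cast [this]; ring
    have harg : (2 * ((N - 2 : ℕ) : ℝ) + 1) * θ = -(3 * θ) + (l : ℤ) * (2 * Real.pi) := by
      rw [hcast, hθdef]; push_cast; field_simp; ring
    rw [harg, Real.sin_add_int_mul_two_pi, Real.sin_neg]
  -- Fin arithmetic helpers
  have hadd : ∀ k : Fin N, ((k + 1 : Fin N) : ℕ) = ((k : ℕ) + 1) % N := by
    intro k
    rw [Fin.add_def]
    simp [Nat.mod_eq_of_lt (show 1 < N by omega)]
  have hsub : ∀ k : Fin N, ((k - 1 : Fin N) : ℕ) = ((k : ℕ) + (N - 1)) % N := by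
    intro k
    rw [Fin.sub_def]
    simp only [Fin.val_one', Nat.mod_eq_of_lt (show 1 < N by omega)]
    rw [Nat.add_comm]
  refine ⟨?_, ?_, ?_⟩
  · -- nonzero
    intro h
    have h0 : Ψ l ⟨0, hNpos⟩ = 0 := by rw [h]; rfl
    rw [hval] at h0
    simp only [Complex.ofReal_eq_zero] at h0
    norm_num at h0
    exact absurd h0 (ne_of_gt hsinθ)
  · -- eigenvector equation
    funext k
    rw [hΔD]
    simp only [Pi.smul_apply, smul_eq_mul]
    by_cases hk0 : (k : ℕ) = 0
    · have h1 : ((k + 1 : Fin N) : ℕ) = 1 := by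
        rw [hadd, hk0, Nat.mod_eq_of_lt (by omega)]
      simp only [hval]
      rw [if_pos hk0, h1, hk0, hν, ← hθdef]
      have e0 : (2 * (((0:ℕ)):ℝ) + 1) * θ = θ := by norm_num
      have e1 : (2 * (((1:ℕ)):ℝ) + 1) * θ = 3 * θ := by push_cast; ring
      rw [e0, e1]
      exact_mod_cast dirichlet_trig_boundary θ
    · by_cases hk1 : (k : ℕ) = N - 1
      · have hm1 : ((k - 1 : Fin N) : ℕ) = N - 2 := by
          rw [hsub, hk1]
          have he : (N - 1) + (N - 1) = N + (N - 2) := by omega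
          rw [he, Nat.add_mod_left, Nat.mod_eq_of_lt (by omega)]
        simp only [hval]
        rw [if_neg hk0, if_pos hk1, hm1, hk1, hν, ← hθdef, hNm1, hNm2]
        have hreal := dirichlet_trig_boundary θ
        have key : -Real.sin (3 * θ) - 3 * (-Real.sin θ)
            = (-4 * Real.sin θ ^ 2) * (-Real.sin θ) := by linarith
        exact_mod_cast key
      · -- interior
        have hk1' : (k : ℕ) ≤ N - 2 := by omega
        have hk0' : 1 ≤ (k : ℕ) := by omega
        have h1 : ((k + 1 : Fin N) : ℕ) = (k : ℕ) + 1 := by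
          rw [hadd, Nat.mod_eq_of_lt (by omega)]
        have hm1 : ((k - 1 : Fin N) : ℕ) = (k : ℕ) - 1 := by
          rw [hsub]
          have he : (k : ℕ) + (N - 1) = N + ((k : ℕ) - 1) := by omega
          rw [he, Nat.add_mod_left, Nat.mod_eq_of_lt (by omega)]
        simp only [hval]
        rw [if_neg hk0, if_neg hk1, h1, hm1, hν, ← hθdef]
        obtain ⟨m, hm⟩ : ∃ m, (k : ℕ) = m + 1 := ⟨(k : ℕ) - 1, by omega⟩
        have hc1 : (((k : ℕ) - 1 : ℕ) : ℝ) = (m : ℝ) := by rw [hm]; push_cast; ring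
        have hc2 : (((k : ℕ)) : ℝ) = (m : ℝ) + 1 := by rw [hm]; push_cast; ring
        have hc3 : (((k : ℕ) + 1 : ℕ) : ℝ) = (m : ℝ) + 2 := by rw [hm]; push_cast; ring
        rw [hc1, hc2, hc3]
        exact_mod_cast dirichlet_trig_interior θ m
  · -- orthogonality
    have hterm : ∀ k : Fin N, (starRingEnd ℂ) (Ψ l k) * x₀ k
        = (if k = (⟨0, hNpos⟩ : Fin N) then ((Real.sin θ : ℝ) : ℂ) / (Real.sqrt 2 : ℝ) else 0)
          + (if k = (⟨N - 1, by omega⟩ : Fin N) then ((-Real.sin θ : ℝ) : ℂ) / (Real.sqrt 2 : ℝ) else 0) := by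
      intro k
      rw [hx₀, hval]
      by_cases hk0 : (k : ℕ) = 0
      · have hkne : ¬ ((k : ℕ) = N - 1) := by omega
        have hke : k = (⟨0, hNpos⟩ : Fin N) := Fin.ext hk0
        have hkne' : k ≠ (⟨N - 1, by omega⟩ : Fin N) := by
          intro h; exact hkne (by rw [h])
        rw [if_pos hk0, if_neg hkne, if_pos hke, if_neg hkne', hk0]
        rw [Complex.conj_ofReal]
        norm_num
        ring
      · by_cases hk1 : (k : ℕ) = N - 1
        · have hke : k = (⟨N - 1, by omega⟩ : Fin N) := Fin.ext hk1
          have hkne' : k ≠ (⟨0, hNpos⟩ : Fin N) := by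
            intro h; exact hk0 (by rw [h])
          rw [if_neg hk0, if_pos hk1, if_neg hkne', if_pos hke, hk1]
          rw [Complex.conj_ofReal, hNm1]
          norm_num
          ring
        · have hkne1 : k ≠ (⟨0, hNpos⟩ : Fin N) := by
            intro h; exact hk0 (by rw [h])
          have hkne2 : k ≠ (⟨N - 1, by omega⟩ : Fin N) := by
            intro h; exact hk1 (by rw [h])
          rw [if_neg hk0, if_neg hk1, if_neg hkne1, if_neg hkne2]
          norm_num
    rw [Finset.sum_congr rfl (fun k _ => hterm k)]
    rw [Finset.sum_add_distrib, Finset.sum_ite_eq' Finset.univ, Finset.sum_ite_eq' Finset.univ]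
    simp only [Finset.mem_univ, if_true]
    push_cast
    ring
end
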